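/- Let I ≥ 2 be an integer, c > 0, and ω_i, μ_i, M_i > 0 for i = 2, ..., I. Let 0 = z_1 < z_2 < ... < z_I and let p : [0, z_I] → ℝ be continuous with p(z_I) = 0, such that on each interval [z_{i−1}, z_i] for i = 2, ..., I the function p is affine with slope −c/μ_i, and ∫_{z_{i−1}}^{z_i} p(z) dz = ω_i M_i for i = 2, ..., I. Then the interface points are given explicitly by: z_2 = (μ_2/c) ( sqrt(2 c Σ_{j=2}^I (ω_j/μ_j) M_j) − sqrt(2 c Σ_{j=3}^I (ω_j/μ_j) M_j) ); z_i = z_{i−1} + (μ_i/c) ( sqrt(2 c Σ_{j=i}^I (ω_j/μ_j) M_j) − sqrt(2 c Σ_{j=i+1}^I (ω_j/μ_j) M_j) ) for i = 3, ..., I−1; and z_I = z_{I−1} + sqrt(2 ω_I μ_I M_I / c). -/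

import Mathlib

/-! On the `i`-th segment `p` is affine with slope `-c/μ_i`, so integrating it gives
`p(z_{i-1})² = p(z_i)² + 2 (c/μ_i) ω_i M_i`. Summing these identities down from `p(z_I) = 0`,
and using that `p` increases to the left, yields `p(z_i) = √(2c Σ_{j>i} ω_j M_j / μ_j)`; the
length of each segment is then the drop of `p` across it divided by the slope `c/μ_i`. -/

open Set

theorem intervalIntegral.integral_const_add_mul_sub (a b C s : ℝ) :
    ∫ x in a..b, (C + s * (b - x)) = C * (b - a) + s / 2 * (b - a) ^ 2 := by
  rw [intervalIntegral.integral_add intervalIntegrable_const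
      ((by fun_prop : Continuous fun x : ℝ => s * (b - x)).intervalIntegrable a b),
    intervalIntegral.integral_const, intervalIntegral.integral_const_mul,
    intervalIntegral.integral_comp_sub_left (fun x => x), integral_id, smul_eq_mul]
  ring

theorem sq_eq_sq_add_of_integral_of_affine {p : ℝ → ℝ} {a b s : ℝ} (hab : a ≤ b)
    (haff : ∀ x ∈ Icc a b, p x = p b + s * (b - x)) :
    p a ^ 2 = p b ^ 2 + 2 * s * ∫ x in a..b, p x := by
  have hint : ∫ x in a..b, p x = ∫ x in a..b, (p b + s * (b - x)) :=
    intervalIntegral.integral_congr fun x hx => haff x (by rwa [uIcc_of_le hab] at hx)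
  rw [hint, intervalIntegral.integral_const_add_mul_sub, haff a ⟨le_rfl, hab⟩]
  ring

theorem eq_sqrt_sum_Icc_of_sq_eq_sq_add {v g : ℕ → ℝ} {k n : ℕ} (hn : v n = 0)
    (hsq : ∀ i, k ≤ i → i < n → v i ^ 2 = v (i + 1) ^ 2 + g (i + 1))
    (hanti : ∀ i, k ≤ i → i < n → v (i + 1) ≤ v i) {i : ℕ} (hki : k ≤ i) (hin : i ≤ n) :
    v i = √(∑ j ∈ Finset.Icc (i + 1) n, g j) := by
  suffices h : 0 ≤ v i ∧ v i ^ 2 = ∑ j ∈ Finset.Icc (i + 1) n, g j by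
    rw [← h.2, Real.sqrt_sq h.1]
  refine Nat.decreasingInduction' (fun j hjn hij ⟨hnonneg, hsum⟩ => ?_) hin (by simp [hn])
  refine ⟨hnonneg.trans (hanti j (hki.trans hij) hjn), ?_⟩
  rw [hsq j (hki.trans hij) hjn, hsum, Finset.Icc_add_one_left_eq_Ioc (j + 1),
    Finset.sum_Ioc_add_eq_sum_Icc hjn]

theorem div_mul_sqrt_two_mul_div_mul {c μ : ℝ} (hc : 0 < c) (hμ : 0 < μ) (ω M : ℝ) :
    μ / c * √(2 * c * (ω / μ * M)) = √(2 * ω * μ * M / c) := by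
  rw [← Real.sqrt_sq (div_pos hμ hc).le, ← Real.sqrt_mul (sq_nonneg _)]
  congr 1
  field_simp

theorem stmt10_general
    (I : ℕ) (hI : 2 ≤ I)
    (c : ℝ) (hc : 0 < c)
    (ω μ M : ℕ → ℝ)
    (hμ : ∀ i, 2 ≤ i → i ≤ I → 0 < μ i)
    (z : ℕ → ℝ) (hz1 : z 1 = 0)
    (hzmono : ∀ i, 1 ≤ i → i < I → z i < z (i + 1))
    (p : ℝ → ℝ)
    (hpzI : p (z I) = 0)
    (haff : ∀ i, 2 ≤ i → i ≤ I →
      ∀ x ∈ Icc (z (i - 1)) (z i), p x = p (z i) + c / μ i * (z i - x))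
    (hmass : ∀ i, 2 ≤ i → i ≤ I →
      ∫ x in (z (i - 1))..(z i), p x = ω i * M i) :
    z 2 = μ 2 / c *
        (Real.sqrt (2 * c * ∑ j ∈ Finset.Icc 2 I, ω j / μ j * M j)
          - Real.sqrt (2 * c * ∑ j ∈ Finset.Icc 3 I, ω j / μ j * M j)) ∧
    (∀ i, 3 ≤ i → i ≤ I - 1 →
      z i = z (i - 1) + μ i / c *
        (Real.sqrt (2 * c * ∑ j ∈ Finset.Icc i I, ω j / μ j * M j)
          - Real.sqrt (2 * c * ∑ j ∈ Finset.Icc (i + 1) I, ω j / μ j * M j))) ∧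
    z I = z (I - 1) + Real.sqrt (2 * ω I * μ I * M I / c) := by
  have hseg : ∀ i, 1 ≤ i → i < I → ∀ x ∈ Icc (z i) (z (i + 1)),
      p x = p (z (i + 1)) + c / μ (i + 1) * (z (i + 1) - x) := fun i _ hi =>
    haff (i + 1) (by omega) hi
  have hint : ∀ i, 1 ≤ i → i < I → ∫ x in z i..z (i + 1), p x = ω (i + 1) * M (i + 1) :=
    fun i _ hi => hmass (i + 1) (by omega) hi
  have hp : ∀ i, 1 ≤ i → i ≤ I →
      p (z i) = √(2 * c * ∑ j ∈ Finset.Icc (i + 1) I, ω j / μ j * M j) := by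
    intro i h1 hi
    rw [Finset.mul_sum]
    refine eq_sqrt_sum_Icc_of_sq_eq_sq_add (v := fun k => p (z k)) hpzI
      (fun j h1 hj => ?_) (fun j h1 hj => ?_) h1 hi
    · rw [sq_eq_sq_add_of_integral_of_affine (hzmono j h1 hj).le (hseg j h1 hj),
        hint j h1 hj]
      ring
    · rw [hseg j h1 hj (z j) ⟨le_rfl, (hzmono j h1 hj).le⟩]
      exact le_add_of_nonneg_right
        (mul_nonneg (div_pos hc (hμ _ (by omega) hj)).le (sub_nonneg.2 (hzmono j h1 hj).le))
  have hz : ∀ i, 2 ≤ i → i ≤ I → z i = z (i - 1) + μ i / c *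
      (√(2 * c * ∑ j ∈ Finset.Icc i I, ω j / μ j * M j)
        - √(2 * c * ∑ j ∈ Finset.Icc (i + 1) I, ω j / μ j * M j)) := by
    intro i h2 hi
    obtain ⟨k, rfl⟩ : ∃ k, i = k + 1 := ⟨i - 1, by omega⟩
    have := (hμ (k + 1) h2 hi).ne'
    rw [Nat.add_sub_cancel, ← hp k (by omega) (by omega), ← hp (k + 1) (by omega) hi,
      hseg k (by omega) hi (z k) ⟨le_rfl, (hzmono k (by omega) hi).le⟩]
    field_simp
    ring
  refine ⟨by simpa [hz1] using hz 2 le_rfl hI, fun i h3 hi => hz i (by omega) (by omega), ?_⟩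
  rw [hz I hI le_rfl, Finset.Icc_self, Finset.Icc_eq_empty (by omega), Finset.sum_singleton,
    Finset.sum_empty, mul_zero, Real.sqrt_zero, sub_zero,
    div_mul_sqrt_two_mul_div_mul hc (hμ I hI le_rfl)]

/-- For the piecewise-affine travelling-wave pressure ahead of
the proliferating region (continuous, slope `−c/μ_i` on `[z_{i−1}, z_i]`,
vanishing at `z_I`, mass `ω_i M_i` on the `i`-th segment), the interface
points `z_2, …, z_I` are given explicitly in terms of `c`, `ω_i`, `μ_i`,
and `M_i`. -/
theorem stmt10
    (I : ℕ) (hI : 2 ≤ I)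
    (c : ℝ) (hc : 0 < c)
    (ω μ M : ℕ → ℝ)
    (hω : ∀ i, 2 ≤ i → i ≤ I → 0 < ω i)
    (hμ : ∀ i, 2 ≤ i → i ≤ I → 0 < μ i)
    (hM : ∀ i, 2 ≤ i → i ≤ I → 0 < M i)
    (z : ℕ → ℝ) (hz1 : z 1 = 0)
    (hzmono : ∀ i, 1 ≤ i → i < I → z i < z (i + 1))
    (p : ℝ → ℝ)
    (hpc : ContinuousOn p (Icc 0 (z I)))
    (hpzI : p (z I) = 0)
    (haff : ∀ i, 2 ≤ i → i ≤ I →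
      ∀ x ∈ Icc (z (i - 1)) (z i), p x = p (z i) + c / μ i * (z i - x))
    (hmass : ∀ i, 2 ≤ i → i ≤ I →
      ∫ x in (z (i - 1))..(z i), p x = ω i * M i) :
    z 2 = μ 2 / c *
        (Real.sqrt (2 * c * ∑ j ∈ Finset.Icc 2 I, ω j / μ j * M j)
          - Real.sqrt (2 * c * ∑ j ∈ Finset.Icc 3 I, ω j / μ j * M j)) ∧
    (∀ i, 3 ≤ i → i ≤ I - 1 →
      z i = z (i - 1) + μ i / c *
        (Real.sqrt (2 * c * ∑ j ∈ Finset.Icc i I, ω j / μ j * M j)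
          - Real.sqrt (2 * c * ∑ j ∈ Finset.Icc (i + 1) I, ω j / μ j * M j))) ∧
    z I = z (I - 1) + Real.sqrt (2 * ω I * μ I * M I / c) :=
  stmt10_general I hI c hc ω μ M hμ z hz1 hzmono p hpzI haff hmass
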